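/- arXiv:0709.1607 — 2 statements merged into one kernel-verified Lean document; each statement's English description precedes it below -/
import Mathlib

section
/- Let φ be a C² solution of φ_tt - e^{-φ}φ_xx = -φ_t², and define v = φ_t, w = φ_x, p = v + e^{-φ/2}w, q = v - e^{-φ/2}w, λ = e^{-φ/2}. Then p satisfies the equation p_t - λ p_x = -(1/4)(p² + 3pq). -/
noncomputable def partialT (f : ℝ → ℝ → ℝ) (t x : ℝ) : ℝ :=
  deriv (fun s => f s x) t

noncomputable def partialX (f : ℝ → ℝ → ℝ) (t x : ℝ) : ℝ :=
  deriv (fun y => f t y) x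

/-!
Write `λ = e^{-φ/2}`, so `λ_t = -λ φ_t / 2` and `λ_x = -λ φ_x / 2`. By the chain rule
`p_t - λ p_x = φ_tt - λ² φ_xx + λ (φ_xt - φ_tx) - λ φ_t φ_x / 2 + λ² φ_x² / 2`.
The mixed derivatives cancel by symmetry of the second derivative of a `C²` function, the
equation replaces `φ_tt - λ² φ_xx` by `-φ_t²`, and `-v² - λ v w / 2 + λ² w² / 2` is exactly
`-(p² + 3 p q) / 4`.
-/

open Function Real

section Slices

variable {E : Type*} [NormedAddCommGroup E] [NormedSpace ℝ E]
  {F : ℝ × ℝ → E} {F' : ℝ × ℝ →L[ℝ] E} {t x : ℝ}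

theorem HasFDerivAt.hasDerivAt_fst_slice (h : HasFDerivAt F F' (t, x)) :
    HasDerivAt (fun s => F (s, x)) (F' (1, 0)) t :=
  h.comp_hasDerivAt t ((hasDerivAt_id t).prodMk (hasDerivAt_const t x))

theorem HasFDerivAt.hasDerivAt_snd_slice (h : HasFDerivAt F F' (t, x)) :
    HasDerivAt (fun y => F (t, y)) (F' (0, 1)) x :=
  h.comp_hasDerivAt x ((hasDerivAt_const x t).prodMk (hasDerivAt_id x))

end Slices

section Partials

variable {f : ℝ → ℝ → ℝ} {t x : ℝ}

theorem partialT_eq_fderiv (hf : DifferentiableAt ℝ (uncurry f) (t, x)) :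
    partialT f t x = fderiv ℝ (uncurry f) (t, x) (1, 0) :=
  hf.hasFDerivAt.hasDerivAt_fst_slice.deriv

theorem partialX_eq_fderiv (hf : DifferentiableAt ℝ (uncurry f) (t, x)) :
    partialX f t x = fderiv ℝ (uncurry f) (t, x) (0, 1) :=
  hf.hasFDerivAt.hasDerivAt_snd_slice.deriv

theorem hasDerivAt_partialT (hf : DifferentiableAt ℝ (uncurry f) (t, x)) :
    HasDerivAt (fun s => f s x) (partialT f t x) t := by
  rw [partialT_eq_fderiv hf]
  exact hf.hasFDerivAt.hasDerivAt_fst_slice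

theorem hasDerivAt_partialX (hf : DifferentiableAt ℝ (uncurry f) (t, x)) :
    HasDerivAt (fun y => f t y) (partialX f t x) x := by
  rw [partialX_eq_fderiv hf]
  exact hf.hasFDerivAt.hasDerivAt_snd_slice

theorem uncurry_partialT_eq_fderiv (hf : Differentiable ℝ (uncurry f)) :
    uncurry (partialT f) = fun z => fderiv ℝ (uncurry f) z (1, 0) :=
  funext fun z => partialT_eq_fderiv (hf z)

theorem uncurry_partialX_eq_fderiv (hf : Differentiable ℝ (uncurry f)) :
    uncurry (partialX f) = fun z => fderiv ℝ (uncurry f) z (0, 1) :=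
  funext fun z => partialX_eq_fderiv (hf z)

theorem ContDiff.uncurry_partialT {n : ℕ} (hf : ContDiff ℝ (n + 1) (uncurry f)) :
    ContDiff ℝ n (uncurry (partialT f)) := by
  rw [uncurry_partialT_eq_fderiv (hf.differentiable (by simp))]
  exact (hf.fderiv_right le_rfl).clm_apply contDiff_const

theorem ContDiff.uncurry_partialX {n : ℕ} (hf : ContDiff ℝ (n + 1) (uncurry f)) :
    ContDiff ℝ n (uncurry (partialX f)) := by
  rw [uncurry_partialX_eq_fderiv (hf.differentiable (by simp))]
  exact (hf.fderiv_right le_rfl).clm_apply contDiff_const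

theorem partialT_partialX_comm (hf : ContDiff ℝ 2 (uncurry f)) :
    partialT (partialX f) t x = partialX (partialT f) t x := by
  have hf1 : Differentiable ℝ (uncurry f) := hf.differentiable (by simp)
  have hf2 : DifferentiableAt ℝ (fderiv ℝ (uncurry f)) (t, x) :=
    (hf.fderiv_right (m := 1) le_rfl).differentiable (by simp) _
  rw [partialT_eq_fderiv (hf.uncurry_partialX.differentiable (by simp) _),
    partialX_eq_fderiv (hf.uncurry_partialT.differentiable (by simp) _),
    uncurry_partialX_eq_fderiv hf1, uncurry_partialT_eq_fderiv hf1,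
    fderiv_clm_apply hf2 (differentiableAt_const _), fderiv_clm_apply hf2 (differentiableAt_const _)]
  simpa using ((hf.contDiffAt (x := (t, x))).isSymmSndFDerivAt (by simp)).eq (1, 0) (0, 1)

end Partials

/-- If `φ` is a C² solution of `φ_tt - e^{-φ} φ_xx = -φ_t²`, and
`p = φ_t + e^{-φ/2} φ_x`, `q = φ_t - e^{-φ/2} φ_x`, `λ = e^{-φ/2}`,
then `p_t - λ p_x = -(1/4)(p² + 3 p q)`. -/
theorem stmt1 (φ : ℝ → ℝ → ℝ) (hφ : ContDiff ℝ 2 (Function.uncurry φ))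
    (heq : ∀ t x, partialT (partialT φ) t x
        - Real.exp (-(φ t x)) * partialX (partialX φ) t x
        = -(partialT φ t x) ^ 2)
    (v w p q lam : ℝ → ℝ → ℝ)
    (hv : ∀ t x, v t x = partialT φ t x)
    (hw : ∀ t x, w t x = partialX φ t x)
    (hp : ∀ t x, p t x = v t x + Real.exp (-(φ t x) / 2) * w t x)
    (hq : ∀ t x, q t x = v t x - Real.exp (-(φ t x) / 2) * w t x)
    (hlam : ∀ t x, lam t x = Real.exp (-(φ t x) / 2)) :
    ∀ t x, partialT p t x - lam t x * partialX p t x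
      = -(1 / 4) * ((p t x) ^ 2 + 3 * p t x * q t x) := by
  intro t x
  have hp_eq : p = fun t x => partialT φ t x + exp (-(φ t x) / 2) * partialX φ t x := by
    funext t x; rw [hp, hv, hw]
  have hφ0 : DifferentiableAt ℝ (uncurry φ) (t, x) := hφ.differentiable (by simp) _
  have hφT : DifferentiableAt ℝ (uncurry (partialT φ)) (t, x) :=
    hφ.uncurry_partialT.differentiable (by simp) _
  have hφX : DifferentiableAt ℝ (uncurry (partialX φ)) (t, x) :=
    hφ.uncurry_partialX.differentiable (by simp) _
  have hpT : partialT p t x = partialT (partialT φ) t x + (exp (-(φ t x) / 2) *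
      (-partialT φ t x / 2) * partialX φ t x + exp (-(φ t x) / 2) * partialT (partialX φ) t x) := by
    rw [hp_eq]
    exact ((hasDerivAt_partialT hφT).add
      (((hasDerivAt_partialT hφ0).neg.div_const 2).exp.mul (hasDerivAt_partialT hφX))).deriv
  have hpX : partialX p t x = partialX (partialT φ) t x + (exp (-(φ t x) / 2) *
      (-partialX φ t x / 2) * partialX φ t x + exp (-(φ t x) / 2) * partialX (partialX φ) t x) := by
    rw [hp_eq]
    exact ((hasDerivAt_partialX hφT).add
      (((hasDerivAt_partialX hφ0).neg.div_const 2).exp.mul (hasDerivAt_partialX hφX))).deriv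
  have hexp : exp (-(φ t x)) = exp (-(φ t x) / 2) ^ 2 := by
    rw [← exp_nat_mul]; ring_nf
  rw [hpT, hpX, partialT_partialX_comm hφ, hp, hq, hv, hw, hlam]
  linear_combination heq t x + partialX (partialX φ) t x * hexp
end

section
/- Let c, a, b be real numbers, f(t) defined by e^{f(t)} = (c/2)t² + at + b on an interval where (c/2)t² + at + b > 0, and let g : ℝ² → ℝ be a C² solution of the Liouville equation Δg = c·e^{g}. Then w(t,x,y) = f(t) + g(x,y) satisfies the equation w_tt + (w_t)² - e^{-w} Δw = 0. -/
/-!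
For `u = e^f` one has `u''/u = f'' + f'²`, so the time part of the operator applied to `w`
is `(e^f)''/e^f = c e^{-f}`. The Laplacian of `w` is that of `g`, namely `c e^g`, and
`e^{-w} · c e^g = c e^{-f}` cancels it.
-/

open Filter Topology Real

theorem deriv_deriv_add_sq_deriv_of_exp_eventuallyEq {f h h' : ℝ → ℝ} {t h'' : ℝ}
    (hfh : ∀ᶠ s in 𝓝 t, exp (f s) = h s)
    (hh : ∀ᶠ s in 𝓝 t, HasDerivAt h (h' s) s) (hh' : HasDerivAt h' h'' t) :
    deriv (deriv f) t + deriv f t ^ 2 = h'' / h t := by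
  have hpos : ∀ᶠ s in 𝓝 t, 0 < h s := hfh.mono fun s hs => hs ▸ exp_pos _
  have hf' : ∀ᶠ s in 𝓝 t, HasDerivAt f (h' s / h s) s := by
    filter_upwards [hfh.eventually_nhds, hh, hpos] with s hfs hhs hs
    have hlog : f =ᶠ[𝓝 s] fun u => log (h u) :=
      hfs.mono fun u hu => by simp only [← hu, log_exp]
    exact (hhs.log hs.ne').congr_of_eventuallyEq hlog
  have hf'' : HasDerivAt (deriv f) ((h'' * h t - h' t * h' t) / h t ^ 2) t :=
    (hh'.div hh.self_of_nhds hpos.self_of_nhds.ne').congr_of_eventuallyEq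
      (hf'.mono fun s hs => hs.deriv)
  have ht : h t ≠ 0 := hpos.self_of_nhds.ne'
  rw [hf''.deriv, hf'.self_of_nhds.deriv]
  field_simp
  ring

theorem hasDerivAt_quadratic (c a b s : ℝ) :
    HasDerivAt (fun s => c / 2 * s ^ 2 + a * s + b) (c * s + a) s :=
  (((hasDerivAt_pow 2 s).const_mul (c / 2)).add ((hasDerivAt_id s).const_mul a)).add_const b
    |>.congr_deriv (by push_cast; ring)

theorem deriv_deriv_add_sq_deriv_of_exp_eq_quadratic {f : ℝ → ℝ} {c a b t : ℝ}
    (hf : ∀ᶠ s in 𝓝 t, exp (f s) = c / 2 * s ^ 2 + a * s + b) :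
    deriv (deriv f) t + deriv f t ^ 2 = c * exp (-f t) := by
  have hlin : HasDerivAt (fun s => c * s + a) c t := by
    simpa using ((hasDerivAt_id t).const_mul c).add_const a
  rw [deriv_deriv_add_sq_deriv_of_exp_eventuallyEq hf
    (.of_forall (hasDerivAt_quadratic c a b)) hlin, ← hf.self_of_nhds, exp_neg, div_eq_mul_inv]

theorem stmt15_general (c a b : ℝ) (I : Set ℝ) (hI : IsOpen I)
    (f : ℝ → ℝ)
    (hf : ∀ t ∈ I, Real.exp (f t) = (c / 2) * t ^ 2 + a * t + b)
    (g : ℝ → ℝ → ℝ)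
    (hLiouville : ∀ x y : ℝ,
      deriv (fun x' => deriv (fun x'' => g x'' y) x') x
        + deriv (fun y' => deriv (fun y'' => g x y'') y') y
        = c * Real.exp (g x y))
    (w : ℝ → ℝ → ℝ → ℝ) (hw : ∀ t x y, w t x y = f t + g x y) :
    ∀ t ∈ I, ∀ x y : ℝ,
      deriv (fun s => deriv (fun s' => w s' x y) s) t
        + (deriv (fun s => w s x y) t) ^ 2
        - Real.exp (-(w t x y))
          * (deriv (fun x' => deriv (fun x'' => w t x'' y) x') x
            + deriv (fun y' => deriv (fun y'' => w t x y'') y') y)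
        = 0 := by
  intro t ht x y
  obtain rfl : w = fun t x y => f t + g x y := funext₃ hw
  simp only [deriv_add_const, deriv_const_add]
  rw [deriv_deriv_add_sq_deriv_of_exp_eq_quadratic (eventually_of_mem (hI.mem_nhds ht) hf),
    hLiouville, neg_add, exp_add, exp_neg (g x y)]
  field_simp
  ring

/-- Separation of variables: if `e^{f(t)} = (c/2)t² + at + b` on an open
interval where the quadratic is positive, and `g` is a C² solution of the
Liouville equation `Δg = c e^g`, then `w(t,x,y) = f(t) + g(x,y)` satisfies
`w_tt + w_t² - e^{-w} Δw = 0`. -/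
theorem stmt15 (c a b : ℝ) (I : Set ℝ) (hI : IsOpen I)
    (hquad : ∀ t ∈ I, 0 < (c / 2) * t ^ 2 + a * t + b)
    (f : ℝ → ℝ)
    (hf : ∀ t ∈ I, Real.exp (f t) = (c / 2) * t ^ 2 + a * t + b)
    (g : ℝ → ℝ → ℝ) (hg : ContDiff ℝ 2 (Function.uncurry g))
    (hLiouville : ∀ x y : ℝ,
      deriv (fun x' => deriv (fun x'' => g x'' y) x') x
        + deriv (fun y' => deriv (fun y'' => g x y'') y') y
        = c * Real.exp (g x y))
    (w : ℝ → ℝ → ℝ → ℝ) (hw : ∀ t x y, w t x y = f t + g x y) :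
    ∀ t ∈ I, ∀ x y : ℝ,
      deriv (fun s => deriv (fun s' => w s' x y) s) t
        + (deriv (fun s => w s x y) t) ^ 2
        - Real.exp (-(w t x y))
          * (deriv (fun x' => deriv (fun x'' => w t x'' y) x') x
            + deriv (fun y' => deriv (fun y'' => w t x y'') y') y)
        = 0 :=
  stmt15_general c a b I hI f hf g hLiouville w hw
end
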